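/- arXiv:2206.01015 — 2 statements merged into one kernel-verified Lean document; each statement's English description precedes it below -/
import Mathlib

section
/- Let S = {(v,w) ∈ ℕ² : 0 ≤ v ≤ 2 and 0 ≤ w ≤ 2} index the degree-2 maximal order basis on the reference quadrilateral. Let M be the diagonal real S×S matrix with M_{(v,w),(v,w)} = 4/((2v+1)(2w+1)). For real parameters q0, q1, let Q be the symmetric S×S matrix whose only nonzero entries are Q_{(2,1),(2,1)} = Q_{(1,2),(1,2)} = q1, Q_{(2,2),(2,2)} = q0, and Q_{(2,0),(2,2)} = Q_{(2,2),(2,0)} = Q_{(0,2),(2,2)} = Q_{(2,2),(0,2)} = −3·q1. Then M + Q is positive definite if and only if q1 > −4/15 and 50·q0 − 1125·q1² + 8 > 0. -/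
/-- Modal mass matrix of the degree-2 maximal order tensor-product Legendre basis:
`M_{(v,w),(v,w)} = 4/((2v+1)(2w+1))`. -/
noncomputable def massMO2 : Matrix (Fin 3 × Fin 3) (Fin 3 × Fin 3) ℝ :=
  Matrix.diagonal fun p =>
    (4 : ℝ) / (((2 * (p.1 : ℕ) + 1) * (2 * (p.2 : ℕ) + 1) : ℕ) : ℝ)

/-- The symmetric filter matrix `Q(q0, q1)` for the degree-2 maximal order basis. -/
def filterMO2 (q0 q1 : ℝ) : Matrix (Fin 3 × Fin 3) (Fin 3 × Fin 3) ℝ :=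
  fun i j =>
    if (i = (2, 1) ∧ j = (2, 1)) ∨ (i = (1, 2) ∧ j = (1, 2)) then q1
    else if i = (2, 2) ∧ j = (2, 2) then q0
    else if (i = (2, 0) ∧ j = (2, 2)) ∨ (i = (2, 2) ∧ j = (2, 0)) ∨
            (i = (0, 2) ∧ j = (2, 2)) ∨ (i = (2, 2) ∧ j = (0, 2)) then -3 * q1
    else 0

/-! Completing the square in the coordinate `(2, 2)`: with `y₀₂ = x₀₂ - 15/4 q1 x₂₂` and
`y₂₀ = x₂₀ - 15/4 q1 x₂₂`, the quadratic form of `M + Q` becomes diagonal, its weights being the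
mass entries except `4/15 + q1` at `(1, 2)`, `(2, 1)` and `4/25 + q0 - 45/2 q1² =
(50 q0 - 1125 q1² + 8)/50` at `(2, 2)`. The change of variables is unipotent, so `M + Q` is
positive definite exactly when these weights are positive. -/

open Matrix

theorem Matrix.posDef_star_mul_diagonal_mul_iff {n R : Type*} [Fintype n] [DecidableEq n]
    [CommRing R] [PartialOrder R] [StarRing R] [StarOrderedRing R] [NoZeroDivisors R]
    [Nontrivial R] {L : Matrix n n R} (hL : IsUnit L) (d : n → R) :
    (star L * diagonal d * L).PosDef ↔ ∀ i, 0 < d i := by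
  rw [hL.posDef_star_left_conjugate_iff, posDef_diagonal_iff]

noncomputable def ldlNilpotentMO2 (q1 : ℝ) : Matrix (Fin 3 × Fin 3) (Fin 3 × Fin 3) ℝ :=
  of fun i j => if (i = (0, 2) ∨ i = (2, 0)) ∧ j = (2, 2) then 15 / 4 * q1 else 0

noncomputable def ldlDiagMO2 (q0 q1 : ℝ) : Fin 3 × Fin 3 → ℝ := fun p =>
  4 / ((2 * (p.1 : ℕ) + 1) * (2 * (p.2 : ℕ) + 1) : ℕ) +
    if p = (1, 2) ∨ p = (2, 1) then q1 else if p = (2, 2) then q0 - 45 / 2 * q1 ^ 2 else 0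

lemma ldlNilpotentMO2_mul_self (q1 : ℝ) : ldlNilpotentMO2 q1 * ldlNilpotentMO2 q1 = 0 := by
  ext i j
  rw [mul_apply, Matrix.zero_apply]
  refine Finset.sum_eq_zero fun k _ => ?_
  by_cases hk : k = (2, 2) <;> simp [ldlNilpotentMO2, hk]

lemma isUnit_one_sub_ldlNilpotentMO2 (q1 : ℝ) : IsUnit (1 - ldlNilpotentMO2 q1) :=
  IsNilpotent.isUnit_one_sub ⟨2, by rw [sq, ldlNilpotentMO2_mul_self]⟩

lemma massMO2_add_filterMO2_eq_ldl (q0 q1 : ℝ) :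
    massMO2 + filterMO2 q0 q1 = star (1 - ldlNilpotentMO2 q1) * diagonal (ldlDiagMO2 q0 q1) *
      (1 - ldlNilpotentMO2 q1) := by
  ext i j
  rw [mul_apply]
  simp only [mul_diagonal, star_eq_conjTranspose, conjTranspose_apply, star_trivial,
    Fintype.sum_prod_type, Fin.sum_univ_three]
  fin_cases i <;> fin_cases j <;>
    simp [massMO2, filterMO2, ldlNilpotentMO2, ldlDiagMO2, one_apply, diagonal] <;> ring

lemma ldlDiagMO2_pos_iff (q0 q1 : ℝ) :
    (∀ p, 0 < ldlDiagMO2 q0 q1 p) ↔ q1 > -4 / 15 ∧ 50 * q0 - 1125 * q1 ^ 2 + 8 > 0 := by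
  simp only [Prod.forall, Fin.forall_fin_succ]
  norm_num [ldlDiagMO2, Fin.ext_iff]
  constructor <;> rintro ⟨h₁, h₂⟩ <;> constructor <;> linarith

/-- For the degree-2 maximal order basis, `M + Q` is positive definite iff
`q1 > -4/15` and `50 q0 - 1125 q1² + 8 > 0`. -/
theorem stmt_0 (q0 q1 : ℝ) :
    (massMO2 + filterMO2 q0 q1).PosDef ↔
      q1 > -4 / 15 ∧ 50 * q0 - 1125 * q1 ^ 2 + 8 > 0 := by
  rw [massMO2_add_filterMO2_eq_ldl,
    posDef_star_mul_diagonal_mul_iff (isUnit_one_sub_ldlNilpotentMO2 q1), ldlDiagMO2_pos_iff]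
end

section
/- Index the degree-2 maximal order modes S = {(v,w) : 0 ≤ v,w ≤ 2}. For real parameters q0, q1, let Q be the symmetric S×S matrix whose only nonzero entries are Q_{(2,1),(2,1)} = Q_{(1,2),(1,2)} = q1, Q_{(2,2),(2,2)} = q0, and Q_{(2,0),(2,2)} = Q_{(2,2),(2,0)} = Q_{(0,2),(2,2)} = Q_{(2,2),(0,2)} = −3·q1. Let D_x be the S×S matrix acting on mode basis vectors by D_x e_{(1,w)} = e_{(0,w)}, D_x e_{(2,w)} = 3·e_{(1,w)}, D_x e_{(0,w)} = 0, and let D_y act analogously in the second index. Let T be the S×S matrix with T e_{(v,w)} = (−1)^w · e_{(w,v)}. Then for all real q0, q1: (i) Q is symmetric; (ii) Q·D_x and Q·D_y are antisymmetric; and (iii) T·Q = Q·T. -/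
open Matrix

/-- Modal differentiation matrix in `x` for the degree-2 maximal order basis:
`Dₓ e_{(1,w)} = e_{(0,w)}`, `Dₓ e_{(2,w)} = 3 e_{(1,w)}`, `Dₓ e_{(0,w)} = 0`. -/
def DxMO2 : Matrix (Fin 3 × Fin 3) (Fin 3 × Fin 3) ℝ :=
  fun i j =>
    if j.1 = 1 ∧ i = (0, j.2) then 1
    else if j.1 = 2 ∧ i = (1, j.2) then 3
    else 0

/-- Modal differentiation matrix in `y` for the degree-2 maximal order basis:
`D_y e_{(v,1)} = e_{(v,0)}`, `D_y e_{(v,2)} = 3 e_{(v,1)}`, `D_y e_{(v,0)} = 0`. -/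
def DyMO2 : Matrix (Fin 3 × Fin 3) (Fin 3 × Fin 3) ℝ :=
  fun i j =>
    if j.2 = 1 ∧ i = (j.1, 0) then 1
    else if j.2 = 2 ∧ i = (j.1, 1) then 3
    else 0

/-- Modal matrix of the quarter-turn rotation pullback:
`T e_{(v,w)} = (−1)^w e_{(w,v)}`. -/
def TMO2 : Matrix (Fin 3 × Fin 3) (Fin 3 × Fin 3) ℝ :=
  fun i j => if i = (j.2, j.1) then (-1 : ℝ) ^ (j.2 : ℕ) else 0

set_option maxHeartbeats 4000000 in
/-- For all real `q0, q1`: `Q` is symmetric, `Q Dₓ` and `Q D_y` are antisymmetric, and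
`Q` commutes with the quarter-turn rotation matrix `T`. -/
theorem stmt_12 (q0 q1 : ℝ) :
    (filterMO2 q0 q1)ᵀ = filterMO2 q0 q1 ∧
    (filterMO2 q0 q1 * DxMO2)ᵀ = -(filterMO2 q0 q1 * DxMO2) ∧
    (filterMO2 q0 q1 * DyMO2)ᵀ = -(filterMO2 q0 q1 * DyMO2) ∧
    TMO2 * filterMO2 q0 q1 = filterMO2 q0 q1 * TMO2 := by
  refine ⟨?_, ?_, ?_, ?_⟩ <;>
  · ext ⟨a, b⟩ ⟨c, d⟩
    fin_cases a <;> fin_cases b <;> fin_cases c <;> fin_cases d <;>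
      simp [Matrix.mul_apply, Fintype.sum_prod_type, Fin.sum_univ_three,
        filterMO2, DxMO2, DyMO2, TMO2, Prod.ext_iff] <;> ring
end
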